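/- For any 1 ≤ p < ∞, τ > 0, δ > 0, positive integer n, and t ∈ [0, 1/2]^n, N_p(ℤ^n, μ_p(τ; t)^{1/p}, t) ≥ exp(τ·μ_p(τ + 2δ; t))·H_p(τ, δ; t). -/

import Mathlib

open Real BigOperators

/-- The ℓ_p "norm" (for a real exponent `p`) of a vector in `ℝ^n`. -/
noncomputable def lpNorm (p : ℝ) {n : ℕ} (x : Fin n → ℝ) : ℝ :=
  (∑ i, |x i| ^ p) ^ (1 / p)

/-- `N_p(ℤ^n, r, t)`: the number of integer points `z ∈ ℤ^n` with `‖z - t‖_p ≤ r`. -/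
noncomputable def Npt (p : ℝ) (n : ℕ) (r : ℝ) (t : Fin n → ℝ) : ℕ :=
  Nat.card {z : Fin n → ℤ | lpNorm p (fun i => (z i : ℝ) - t i) ≤ r}

/-- `Θ_p(τ; s) = ∑_{z ∈ ℤ} exp(-τ |z - s|^p)`. -/
noncomputable def Theta1 (p τ s : ℝ) : ℝ :=
  ∑' z : ℤ, Real.exp (-τ * |(z : ℝ) - s| ^ p)

/-- `Θ_p(τ; t) = ∏_i Θ_p(τ; t_i)` for a vector `t ∈ ℝ^n`. -/
noncomputable def ThetaVec (p : ℝ) {n : ℕ} (τ : ℝ) (t : Fin n → ℝ) : ℝ :=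
  ∏ i, Theta1 p τ (t i)

/-- `μ_p(τ; s) = E_{X ∼ D_p(τ;s)}[|X|^p]`. -/
noncomputable def mu1 (p τ s : ℝ) : ℝ :=
  (∑' z : ℤ, |(z : ℝ) - s| ^ p * Real.exp (-τ * |(z : ℝ) - s| ^ p)) / Theta1 p τ s

/-- `μ_p(τ; t) = ∑_i μ_p(τ; t_i)` for a vector `t ∈ ℝ^n`. -/
noncomputable def muVec (p : ℝ) {n : ℕ} (τ : ℝ) (t : Fin n → ℝ) : ℝ :=
  ∑ i, mu1 p τ (t i)

/-- `H_p(τ, δ; t) := Θ_p(τ+δ; t) − exp(−δ μ_p(τ; t)) Θ_p(τ; t)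
− exp(δ μ_p(τ+2δ; t)) Θ_p(τ+2δ; t)`. -/
noncomputable def Hfun (p : ℝ) {n : ℕ} (τ δ : ℝ) (t : Fin n → ℝ) : ℝ :=
  ThetaVec p (τ + δ) t - Real.exp (-δ * muVec p τ t) * ThetaVec p τ t -
    Real.exp (δ * muVec p (τ + 2 * δ) t) * ThetaVec p (τ + 2 * δ) t

/-! Write `X z = ∑ i, |z i - t i| ^ p = ‖z - t‖_p ^ p`. For every `z ∈ ℤ^n`, `exp (-(τ + δ) X)` is
at most `exp (-δ μ) exp (-τ X)` when `X ≥ μ`, at most `exp (δ μ') exp (-(τ + 2δ) X)` when `X ≤ μ'`,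
and at most `exp (-τ μ')` in the window `μ' < X < μ`, where `z` lies in the ball of radius `μ^{1/p}`
around `t`. Summing over `z` (the theta series factorize over the coordinates) gives
`Θ(τ + δ) ≤ exp (-δ μ) Θ(τ) + exp (δ μ') Θ(τ + 2δ) + N_p(ℤ^n, μ^{1/p}, t) exp (-τ μ')`, which
rearranges to the claim with `μ = μ_p(τ; t)` and `μ' = μ_p(τ + 2δ; t)`. -/

lemma sub_one_le_rpow {x p : ℝ} (hx : 0 ≤ x) (hp : 1 ≤ p) : x - 1 ≤ x ^ p := by
  rcases le_total x 1 with h | h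
  · linarith [Real.rpow_nonneg hx p]
  · calc x - 1 ≤ x ^ (1 : ℝ) := by rw [Real.rpow_one]; linarith
      _ ≤ x ^ p := Real.rpow_le_rpow_of_exponent_le h hp

lemma summable_geometric_natAbs {r : ℝ} (hr₀ : 0 ≤ r) (hr₁ : r < 1) :
    Summable fun z : ℤ => r ^ z.natAbs := by
  apply Summable.of_nat_of_neg <;> simpa using summable_geometric_of_lt_one hr₀ hr₁

lemma summable_exp_neg_mul_abs_sub_rpow {p c : ℝ} (hp : 1 ≤ p) (hc : 0 < c) (s : ℝ) :
    Summable fun z : ℤ => exp (-c * |(z : ℝ) - s| ^ p) := by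
  refine Summable.of_nonneg_of_le (fun _ => (exp_pos _).le) (fun z => ?_)
    ((summable_geometric_natAbs (exp_pos (-c)).le (exp_lt_one_iff.2 (by linarith))).mul_left
      (exp (c * (|s| + 1))))
  have hz : (z.natAbs : ℝ) - (|s| + 1) ≤ |(z : ℝ) - s| ^ p := by
    have := sub_one_le_rpow (abs_nonneg ((z : ℝ) - s)) hp
    have := abs_sub_abs_le_abs_sub (z : ℝ) s
    rw [Nat.cast_natAbs, Int.cast_abs]
    linarith
  rw [← exp_nat_mul, ← exp_add]
  exact exp_le_exp.2 (by nlinarith)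

lemma hasSum_fin_prod_of_nonneg {α : Type*} {n : ℕ} {f : Fin n → α → ℝ} {a : Fin n → ℝ}
    (hf : ∀ i, HasSum (f i) (a i)) (hf₀ : ∀ i x, 0 ≤ f i x) :
    HasSum (fun x : Fin n → α => ∏ i, f i (x i)) (∏ i, a i) := by
  induction n with
  | zero => simp
  | succ n ih =>
    set g : (Fin n → α) → ℝ := fun w => ∏ i : Fin n, f i.succ (w i)
    have hg : HasSum g (∏ i : Fin n, a i.succ) := ih (fun i => hf i.succ) (fun i => hf₀ i.succ)
    have hg₀ : 0 ≤ g := fun w => Finset.prod_nonneg fun i _ => hf₀ i.succ (w i)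
    have hprod :
        HasSum (fun q : α × (Fin n → α) => f 0 q.1 * g q.2) (a 0 * ∏ i : Fin n, a i.succ) :=
      (hf 0).mul hg ((hf 0).summable.mul_of_nonneg (g := g) hg.summable (hf₀ 0) hg₀)
    rw [Fin.prod_univ_succ, ← (Fin.consEquiv fun _ => α).hasSum_iff]
    refine hprod.congr_fun fun q => ?_
    simp [g, Fin.consEquiv, Fin.prod_univ_succ]

lemma hasSum_thetaVec {p c : ℝ} (hp : 1 ≤ p) (hc : 0 < c) {n : ℕ} (t : Fin n → ℝ) :
    HasSum (fun z : Fin n → ℤ => exp (-c * ∑ i, |(z i : ℝ) - t i| ^ p)) (ThetaVec p c t) := by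
  refine (hasSum_fin_prod_of_nonneg
    (fun i => (summable_exp_neg_mul_abs_sub_rpow hp hc (t i)).hasSum)
    fun _ _ => (exp_pos _).le).congr_fun fun z => ?_
  rw [Finset.mul_sum, exp_sum]

lemma finite_setOf_lpNorm_sub_le {p : ℝ} (hp : 0 < p) (r : ℝ) {n : ℕ} (t : Fin n → ℝ) :
    {z : Fin n → ℤ | lpNorm p (fun i => (z i : ℝ) - t i) ≤ r}.Finite := by
  refine (Set.Finite.pi fun i => Set.finite_Icc ⌈t i - r⌉ ⌊t i + r⌋).subset fun z hz i _ => ?_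
  set X := ∑ j, |(z j : ℝ) - t j| ^ p
  have hX : 0 ≤ X := Finset.sum_nonneg fun j _ => Real.rpow_nonneg (abs_nonneg _) _
  have hXr : X ≤ r ^ p :=
    calc X = (X ^ p⁻¹) ^ p := (Real.rpow_inv_rpow hX hp.ne').symm
      _ ≤ r ^ p := Real.rpow_le_rpow (Real.rpow_nonneg hX _) (by simpa [lpNorm] using hz) hp.le
  have hi : |(z i : ℝ) - t i| ≤ r :=
    (Real.rpow_le_rpow_iff (abs_nonneg _) ((Real.rpow_nonneg hX _).trans hz) hp).1 <|
      (Finset.single_le_sum (fun j _ => Real.rpow_nonneg (abs_nonneg ((z j : ℝ) - t j)) p)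
        (Finset.mem_univ i)).trans hXr
  rw [abs_le] at hi
  exact ⟨Int.ceil_le.2 (by linarith), Int.le_floor.2 (by linarith)⟩

lemma hasSum_indicator_const_of_finite {β : Type*} {s : Set β} (hs : s.Finite) (c : ℝ) :
    HasSum (s.indicator fun _ => c) (Nat.card s * c) := by
  have := hs.fintype
  rw [← hasSum_subtype_iff_indicator, Nat.card_eq_fintype_card]
  simpa [Function.comp_def] using hasSum_fintype (fun _ : s => c)

lemma exp_neg_add_mul_le {τ δ a b X c : ℝ} (hτ : 0 ≤ τ) (hδ : 0 ≤ δ) (hX : 0 ≤ X) (hc : 0 ≤ c)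
    (hmid : b < X → X < a → exp (-τ * b) ≤ c) :
    exp (-(τ + δ) * X) ≤
      exp (-δ * a) * exp (-τ * X) + exp (δ * b) * exp (-(τ + 2 * δ) * X) + c := by
  have hA := mul_pos (exp_pos (-δ * a)) (exp_pos (-τ * X))
  have hB := mul_pos (exp_pos (δ * b)) (exp_pos (-(τ + 2 * δ) * X))
  rcases le_or_gt a X with haX | hXa
  · have : exp (-(τ + δ) * X) ≤ exp (-δ * a) * exp (-τ * X) := by
      rw [← exp_add]; exact exp_le_exp.2 (by nlinarith)
    linarith
  rcases le_or_gt X b with hXb | hbX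
  · have : exp (-(τ + δ) * X) ≤ exp (δ * b) * exp (-(τ + 2 * δ) * X) := by
      rw [← exp_add]; exact exp_le_exp.2 (by nlinarith)
    linarith
  · have : exp (-(τ + δ) * X) ≤ exp (-τ * b) := exp_le_exp.2 (by nlinarith)
    linarith [hmid hbX hXa]

lemma thetaVec_le_add_add_card_mul {p τ δ : ℝ} (hp : 1 ≤ p) (hτ : 0 < τ) (hδ : 0 ≤ δ) (a b : ℝ)
    {n : ℕ} (t : Fin n → ℝ) :
    ThetaVec p (τ + δ) t ≤ exp (-δ * a) * ThetaVec p τ t +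
      exp (δ * b) * ThetaVec p (τ + 2 * δ) t + Npt p n (a ^ (1 / p)) t * exp (-τ * b) := by
  set S := {z : Fin n → ℤ | lpNorm p (fun i => (z i : ℝ) - t i) ≤ a ^ (1 / p)}
  have hS : HasSum (S.indicator fun _ => exp (-τ * b)) (Npt p n (a ^ (1 / p)) t * exp (-τ * b)) :=
    hasSum_indicator_const_of_finite (finite_setOf_lpNorm_sub_le (by linarith) _ t) _
  refine hasSum_le (fun z => ?_) (hasSum_thetaVec hp (by linarith) t)
    ((((hasSum_thetaVec hp hτ t).mul_left _).add
      ((hasSum_thetaVec hp (by linarith) t).mul_left _)).add hS)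
  have hX : 0 ≤ ∑ i, |(z i : ℝ) - t i| ^ p :=
    Finset.sum_nonneg fun _ _ => Real.rpow_nonneg (abs_nonneg _) _
  refine exp_neg_add_mul_le hτ.le hδ hX (Set.indicator_nonneg (fun _ _ => (exp_pos _).le) z)
    fun _ hXa => (Set.indicator_of_mem (s := S) ?_ fun _ => exp (-τ * b)).ge
  exact Real.rpow_le_rpow hX hXa.le (by positivity)

theorem H_gives_lower_bound_general (p τ δ : ℝ) (hp : 1 ≤ p) (hτ : 0 < τ) (hδ : 0 < δ)
    (n : ℕ) (t : Fin n → ℝ) :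
    Real.exp (τ * muVec p (τ + 2 * δ) t) * Hfun p τ δ t ≤
      (Npt p n ((muVec p τ t) ^ (1 / p)) t : ℝ) := by
  set μ' := muVec p (τ + 2 * δ) t
  set N : ℝ := (Npt p n ((muVec p τ t) ^ (1 / p)) t : ℝ)
  have hH : Hfun p τ δ t ≤ N * exp (-τ * μ') := by
    have := thetaVec_le_add_add_card_mul hp hτ hδ.le (muVec p τ t) μ' t
    rw [Hfun]
    linarith
  calc exp (τ * μ') * Hfun p τ δ t ≤ exp (τ * μ') * (N * exp (-τ * μ')) :=
        mul_le_mul_of_nonneg_left hH (exp_pos _).le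
    _ = N := by rw [mul_left_comm, ← exp_add]; simp

/-- For any `1 ≤ p < ∞`, `τ > 0`, `δ > 0`, positive integer `n` and `t ∈ [0,1/2]^n`,
`N_p(ℤ^n, μ_p(τ;t)^{1/p}, t) ≥ exp(τ μ_p(τ+2δ; t)) H_p(τ, δ; t)`. -/
theorem H_gives_lower_bound (p τ δ : ℝ) (hp : 1 ≤ p) (hτ : 0 < τ) (hδ : 0 < δ)
    (n : ℕ) (hn : 0 < n) (t : Fin n → ℝ) (ht : ∀ i, t i ∈ Set.Icc (0 : ℝ) (1 / 2)) :
    Real.exp (τ * muVec p (τ + 2 * δ) t) * Hfun p τ δ t ≤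
      (Npt p n ((muVec p τ t) ^ (1 / p)) t : ℝ) :=
  H_gives_lower_bound_general p τ δ hp hτ hδ n t
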